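/- Let (S, Δ, P) be a probability space, let (α,β) be an (α,β)-pair, let 0 < γ₁ ≤ γ₂ ≤ 1, and let g : ℝ → ℝ be a continuous function. If a sequence {X_n} of real-valued random variables on S satisfies X_n →^{PS_{αβ}^{γ₁}} X, then g(X_n) →^{PS_{αβ}^{γ₂}} g(X). -/

import Mathlib

open MeasureTheory Filter Set

/-- An (α,β)-pair: two non-decreasing sequences of positive reals with
`a n ≤ b n` for all `n` and `b n - a n → ∞`. -/
def ABPair (a b : ℕ → ℝ) : Prop :=
  Monotone a ∧ Monotone b ∧ (∀ n, 0 < a n) ∧ (∀ n, a n ≤ b n) ∧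
    Tendsto (fun n => b n - a n) atTop atTop

/-- The set of natural indices `k ∈ [a n, b n]` satisfying a predicate `p`. -/
def abIdx (a b : ℕ → ℝ) (n : ℕ) (p : ℕ → Prop) : Set ℕ :=
  {k : ℕ | a n ≤ (k : ℝ) ∧ (k : ℝ) ≤ b n ∧ p k}

/-- αβ-statistical convergence of order γ of a real sequence `x` to `l`. -/
def ABStatConv (a b : ℕ → ℝ) (γ : ℝ) (x : ℕ → ℝ) (l : ℝ) : Prop :=
  ∀ ε > 0,
    Tendsto (fun n => ((abIdx a b n fun k => ε ≤ |x k - l|).ncard : ℝ) / (b n - a n + 1) ^ γ)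
      atTop (nhds 0)

/-- αβ-statistical convergence of order γ in probability of the sequence of random
variables `X` to the random variable `L`, w.r.t. the probability measure `P`. -/
def PSConv {Ω : Type*} [MeasurableSpace Ω] (P : Measure Ω)
    (a b : ℕ → ℝ) (γ : ℝ) (X : ℕ → Ω → ℝ) (L : Ω → ℝ) : Prop :=
  ∀ ε > 0, ∀ δ > 0,
    Tendsto (fun n =>
      ((abIdx a b n fun k => δ ≤ (P {ω | ε ≤ |X k ω - L ω|}).toReal).ncard : ℝ)
        / (b n - a n + 1) ^ γ) atTop (nhds 0)

/-- αβ-strong p-Cesàro summability of order γ in probability. -/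
def PWConv {Ω : Type*} [MeasurableSpace Ω] (P : Measure Ω)
    (a b : ℕ → ℝ) (γ p : ℝ) (X : ℕ → Ω → ℝ) (L : Ω → ℝ) : Prop :=
  ∀ ε > 0,
    Tendsto (fun n =>
      (∑ k ∈ Finset.Icc ⌈a n⌉₊ ⌊b n⌋₊, ((P {ω | ε ≤ |X k ω - L ω|}).toReal) ^ p)
        / (b n - a n + 1) ^ γ) atTop (nhds 0)

/-- αβ-statistical convergence of order γ in r-th expectation. -/
def ESConv {Ω : Type*} [MeasurableSpace Ω] (P : Measure Ω)
    (a b : ℕ → ℝ) (γ r : ℝ) (X : ℕ → Ω → ℝ) (L : Ω → ℝ) : Prop :=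
  ∀ ε > 0,
    Tendsto (fun n =>
      ((abIdx a b n fun k => ε ≤ ∫ ω, |X k ω - L ω| ^ r ∂P).ncard : ℝ)
        / (b n - a n + 1) ^ γ) atTop (nhds 0)

/-- αβ-statistical convergence of order γ in distribution: the distribution functions
converge αβ-statistically of order γ at every continuity point of the limit d.f. -/
def DSConv {Ω : Type*} [MeasurableSpace Ω] (P : Measure Ω)
    (a b : ℕ → ℝ) (γ : ℝ) (X : ℕ → Ω → ℝ) (L : Ω → ℝ) : Prop :=
  ∀ x : ℝ, ContinuousAt (fun t => (P {ω | L ω ≤ t}).toReal) x →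
    ABStatConv a b γ (fun n => (P {ω | X n ω ≤ x}).toReal) ((P {ω | L ω ≤ x}).toReal)

/-- `K ⊆ ℕ` has αβ-density of order γ zero. -/
def ABDensityZero (a b : ℕ → ℝ) (γ : ℝ) (K : Set ℕ) : Prop :=
  Tendsto (fun n => ((abIdx a b n fun k => k ∈ K).ncard : ℝ) / (b n - a n + 1) ^ γ)
    atTop (nhds 0)

/-- αβ-statistical limit superior of order γ of a real sequence. -/
noncomputable def abStatLimsup (a b : ℕ → ℝ) (γ : ℝ) (x : ℕ → ℝ) : ℝ :=
  sSup {t : ℝ | ¬ ABDensityZero a b γ {k | t < x k}}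

/-- αβ-statistical limit inferior of order γ of a real sequence. -/
noncomputable def abStatLiminf (a b : ℕ → ℝ) (γ : ℝ) (x : ℕ → ℝ) : ℝ :=
  sInf {t : ℝ | ¬ ABDensityZero a b γ {k | x k < t}}

/-! Given `ε, δ > 0`, pick `m` with `P(|X₀| ≥ m) < δ/2` and, by uniform continuity of `g` near
`[-m, m]`, some `η > 0` with `|g x - g y| < ε` whenever `|y| ≤ m` and `|x - y| < η`. Then
`P(|g(X_k) - g(X₀)| ≥ ε) ≤ P(|X_k - X₀| ≥ η) + δ/2`, so the indices counted for `g ∘ X` at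
`(ε, δ)` are among those counted for `X` at `(η, δ/2)`; passing from order `γ₁` to `γ₂ ≥ γ₁`
only enlarges the denominator `(b n - a n + 1)^γ`, whose base is at least `1`. -/

open Topology

theorem abIdx_finite (a b : ℕ → ℝ) (n : ℕ) (p : ℕ → Prop) : (abIdx a b n p).Finite :=
  (Set.finite_Iic ⌊b n⌋₊).subset fun _ hk => Nat.le_floor hk.2.1

theorem ABDensityZero.mono {a b : ℕ → ℝ} {γ₁ γ₂ : ℝ} {K L : Set ℕ} (hab : ∀ n, a n ≤ b n)
    (hγ : γ₁ ≤ γ₂) (hKL : K ⊆ L) (hL : ABDensityZero a b γ₁ L) : ABDensityZero a b γ₂ K := by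
  refine squeeze_zero (fun n => ?_) (fun n => ?_) hL
  · have : (0 : ℝ) ≤ b n - a n + 1 := by linarith [hab n]
    positivity
  · have hD : 1 ≤ b n - a n + 1 := by linarith [hab n]
    have hcard : (abIdx a b n (· ∈ K)).ncard ≤ (abIdx a b n (· ∈ L)).ncard :=
      Set.ncard_le_ncard (fun k hk => ⟨hk.1, hk.2.1, hKL hk.2.2⟩) (abIdx_finite a b n _)
    exact div_le_div₀ (Nat.cast_nonneg _) (by exact_mod_cast hcard)
      (Real.rpow_pos_of_pos (by linarith) _) (Real.rpow_le_rpow_of_exponent_le hD hγ)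

theorem psConv_iff_abDensityZero {Ω : Type*} [MeasurableSpace Ω] (P : Measure Ω)
    (a b : ℕ → ℝ) (γ : ℝ) (X : ℕ → Ω → ℝ) (L : Ω → ℝ) :
    PSConv P a b γ X L ↔ ∀ ε > 0, ∀ δ > 0,
      ABDensityZero a b γ {k | δ ≤ P.real {ω | ε ≤ |X k ω - L ω|}} :=
  Iff.rfl

theorem tendsto_measureReal_abs_ge_atTop {Ω : Type*} [MeasurableSpace Ω] (μ : Measure Ω)
    [IsFiniteMeasure μ] {f : Ω → ℝ} (hf : AEMeasurable f μ) :
    Tendsto (fun r : ℝ => μ.real {ω | r ≤ |f ω|}) atTop (𝓝 0) := by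
  have hInter : (⋂ r : ℝ, {ω | r ≤ |f ω|}) = ∅ :=
    Set.eq_empty_of_forall_notMem fun ω hω =>
      (lt_add_one |f ω|).not_ge (Set.mem_iInter.mp hω (|f ω| + 1))
  have h := tendsto_measure_iInter_atTop (μ := μ)
    (fun r => nullMeasurableSet_le aemeasurable_const hf.abs)
    (fun r s hrs ω (hω : s ≤ |f ω|) => hrs.trans hω) ⟨0, measure_ne_top μ _⟩
  rw [hInter, measure_empty] at h
  exact (ENNReal.tendsto_toReal ENNReal.zero_ne_top).comp h

theorem Continuous.exists_pos_abs_sub_lt_of_abs_le {g : ℝ → ℝ} (hg : Continuous g) (m : ℝ)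
    {ε : ℝ} (hε : 0 < ε) :
    ∃ η > 0, ∀ x y, |y| ≤ m → |x - y| < η → |g x - g y| < ε := by
  have hU := (isCompact_closedBall (0 : ℝ) m).uniformContinuousAt_of_continuousAt g
    (fun y _ => hg.continuousAt) (Metric.dist_mem_uniformity hε)
  obtain ⟨η, hη, hηU⟩ := Metric.mem_uniformity_dist.mp hU
  refine ⟨η, hη, fun x y hy hxy => ?_⟩
  have := hηU (a := y) (b := x) (by rwa [Real.dist_eq, abs_sub_comm]) (by simpa using hy)
  simpa [Real.dist_eq, abs_sub_comm] using this

theorem PSConv_continuous_image_general {Ω : Type*} [MeasurableSpace Ω]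
    (P : Measure Ω) [IsProbabilityMeasure P]
    (a b : ℕ → ℝ) (hab : ABPair a b)
    (γ₁ γ₂ : ℝ) (h12 : γ₁ ≤ γ₂)
    (g : ℝ → ℝ) (hg : Continuous g)
    (X : ℕ → Ω → ℝ) (X₀ : Ω → ℝ)
    (hX₀ : Measurable X₀)
    (h : PSConv P a b γ₁ X X₀) :
    PSConv P a b γ₂ (fun n ω => g (X n ω)) (fun ω => g (X₀ ω)) := by
  rw [psConv_iff_abDensityZero] at h ⊢
  intro ε hε δ hδ
  obtain ⟨m, hm⟩ := ((tendsto_measureReal_abs_ge_atTop P hX₀.aemeasurable).eventually_lt_const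
    (half_pos hδ)).exists
  obtain ⟨η, hη, hgη⟩ := hg.exists_pos_abs_sub_lt_of_abs_le m hε
  refine (h η hη (δ / 2) (half_pos hδ)).mono hab.2.2.2.1 h12 fun k hk => ?_
  have hsub : {ω | ε ≤ |g (X k ω) - g (X₀ ω)|} ⊆
      {ω | η ≤ |X k ω - X₀ ω|} ∪ {ω | m ≤ |X₀ ω|} := by
    intro ω hω
    by_contra hout
    obtain ⟨hclose, hbounded⟩ := not_or.mp hout
    exact (hgη _ _ (not_le.mp hbounded).le (not_le.mp hclose)).not_ge hω
  have hunion := (measureReal_mono hsub).trans (measureReal_union_le (μ := P) _ _)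
  change δ ≤ _ at hk
  change δ / 2 ≤ _
  linarith

/-- Theorem 2.2(iv): continuous images of αβ-statistically convergent (in probability)
sequences converge (with an order `γ₂ ≥ γ₁`). -/
theorem PSConv_continuous_image {Ω : Type*} [MeasurableSpace Ω]
    (P : Measure Ω) [IsProbabilityMeasure P]
    (a b : ℕ → ℝ) (hab : ABPair a b)
    (γ₁ γ₂ : ℝ) (hγ₁0 : 0 < γ₁) (h12 : γ₁ ≤ γ₂) (hγ₂1 : γ₂ ≤ 1)
    (g : ℝ → ℝ) (hg : Continuous g)
    (X : ℕ → Ω → ℝ) (X₀ : Ω → ℝ)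
    (hX : ∀ n, Measurable (X n)) (hX₀ : Measurable X₀)
    (h : PSConv P a b γ₁ X X₀) :
    PSConv P a b γ₂ (fun n ω => g (X n ω)) (fun ω => g (X₀ ω)) :=
  PSConv_continuous_image_general P a b hab γ₁ γ₂ h12 g hg X X₀ hX₀ h
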